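/- Truncation error bound for Term I(b): let L_z > 0, a > 0, ρ > 0, M ≥ 0, and γ_u, γ_d ∈ (−1, 1). Then |∫_M^∞ (γ_u γ_d / (1 − γ_u γ_d e^{−2 k L_z})) e^{−2 k L_z} e^{−a k} J₀(ρ k) dk| ≤ (|γ_u γ_d| / (1 − max{0, γ_u γ_d})) · (1/√(ρ L_z)) · erfc(√(2 L_z M)). -/

import Mathlib

open MeasureTheory

/-- The zeroth-order Bessel function of the first kind. -/
noncomputable def besselJ0 (r : ℝ) : ℝ :=
  ((1 / (2 * Real.pi) : ℂ) *
    ∫ θ in (0 : ℝ)..(2 * Real.pi), Complex.exp (Complex.I * r * Real.sin θ)).re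

/-- The complementary error function `erfc(x) = (2/√π) ∫_x^∞ e^{-u²} du`. -/
noncomputable def erfc (x : ℝ) : ℝ :=
  (2 / Real.sqrt Real.pi) * ∫ u in Set.Ioi x, Real.exp (-u ^ 2)

/-!
Writing `J₀(x) = (2/π) ∫₀^{π/2} cos (x sin θ) dθ` and substituting `t = sin θ` on `[0, arcsin b]`
turns the integral into the real part of `∫₀^b e^{ixt} (1 - t²)^{-1/2} dt`. By Cauchy's theorem on
`[0, b] × [0, R]` this contour can be turned to the vertical ray above `b`, where
`|1 - (b + iy)²| ≥ 2by`; the ray contributes at most `∫₀^∞ e^{-xy} (2by)^{-1/2} dy = √(π/(2bx))`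
and the top edge vanishes as `R → ∞`. Letting `b → 1` gives `|J₀(x)| ≤ √(2/π) / √x`.
The integrand of `I(b)` is then at most `|γ|/(1 - max 0 γ) · √(2/(πρ)) · e^{-2 L_z k}/√k`, and
the substitution `k = u²/(2 L_z)` evaluates the integral of the latter over `(M, ∞)` as an `erfc`.
-/

open Real Set Filter Topology intervalIntegral

lemma besselJ0_eq_integral_cos (r : ℝ) :
    besselJ0 r = (2 * π)⁻¹ * ∫ θ in (0)..(2 * π), cos (r * sin θ) := by
  have hcont : Continuous fun θ : ℝ => Complex.exp (Complex.I * r * Real.sin θ) := by fun_prop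
  rw [besselJ0, one_div, ← Complex.ofReal_ofNat, ← Complex.ofReal_mul, ← Complex.ofReal_inv,
    Complex.re_ofReal_mul, ← Complex.reCLM_apply,
    ← Complex.reCLM.intervalIntegral_comp_comm (hcont.intervalIntegrable _ _)]
  congr 1
  refine integral_congr fun θ _ => ?_
  rw [Complex.reCLM_apply, mul_comm Complex.I, mul_right_comm, ← Complex.ofReal_mul,
    Complex.exp_ofReal_mul_I_re]

lemma integral_comp_sin_zero_two_pi {g : ℝ → ℝ} (hg : Continuous g) (heven : ∀ x, g (-x) = g x) :
    ∫ θ in (0)..(2 * π), g (sin θ) = 4 * ∫ θ in (0)..(π / 2), g (sin θ) := by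
  have hint : ∀ a b : ℝ, IntervalIntegrable (fun θ => g (sin θ)) volume a b :=
    fun a b => (hg.comp continuous_sin).intervalIntegrable a b
  have hshift : ∫ θ in π..(2 * π), g (sin θ) = ∫ θ in (0)..π, g (sin θ) := by
    simpa [two_mul, sin_add_pi, heven] using
      (integral_comp_add_right (fun θ => g (sin θ)) π (a := 0) (b := π)).symm
  have hreflect : ∫ θ in (π / 2)..π, g (sin θ) = ∫ θ in (0)..(π / 2), g (sin θ) := by
    have := integral_comp_sub_left (fun θ => g (sin θ)) π (a := 0) (b := π / 2)
    simp only [sin_pi_sub, sub_zero, sub_half] at this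
    exact this.symm
  rw [← integral_add_adjacent_intervals (hint 0 π) (hint π _), hshift,
    ← integral_add_adjacent_intervals (hint 0 (π / 2)) (hint _ π), hreflect]
  ring

lemma integral_comp_sin_zero_arcsin {g : ℝ → ℝ} (hg : Continuous g) {b : ℝ} (hb0 : 0 ≤ b)
    (hb1 : b < 1) :
    ∫ θ in (0)..(arcsin b), g (sin θ) = ∫ t in (0)..b, g t / √(1 - t ^ 2) := by
  have harc0 : 0 ≤ arcsin b := arcsin_nonneg.2 hb0
  have harc : arcsin b < π / 2 := arcsin_lt_pi_div_two.2 hb1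
  have hcos : ∀ θ ∈ uIcc 0 (arcsin b), 0 < cos θ := fun θ hθ => by
    rw [uIcc_of_le harc0] at hθ
    exact cos_pos_of_mem_Ioo ⟨by linarith [pi_pos, hθ.1], by linarith [hθ.2]⟩
  have hsin : sin '' uIcc 0 (arcsin b) ⊆ Ioo (-1) 1 := by
    rintro _ ⟨θ, hθ, rfl⟩
    rw [uIcc_of_le harc0] at hθ
    refine ⟨?_, ?_⟩
    · have := sin_nonneg_of_nonneg_of_le_pi hθ.1 (by linarith [pi_pos, hθ.2])
      linarith
    · calc sin θ ≤ sin (arcsin b) :=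
            sin_le_sin_of_le_of_le_pi_div_two (by linarith [pi_pos, hθ.1]) harc.le hθ.2
        _ = b := sin_arcsin (by linarith) hb1.le
        _ < 1 := hb1
  have hcont : ContinuousOn (fun t => g t / √(1 - t ^ 2)) (sin '' uIcc 0 (arcsin b)) := by
    refine (hg.continuousOn.div (by fun_prop) fun t ht => ?_).mono hsin
    exact (sqrt_pos.2 (by nlinarith [ht.1, ht.2])).ne'
  have key := integral_comp_mul_deriv' (fun θ _ => hasDerivAt_sin θ) continuous_cos.continuousOn
    hcont
  rw [sin_zero, sin_arcsin (by linarith) hb1.le] at key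
  rw [← key]
  refine integral_congr fun θ hθ => ?_
  rw [Function.comp_apply, ← cos_sq', sqrt_sq (hcos θ hθ).le, div_mul_cancel₀ _ (hcos θ hθ).ne']

lemma integral_Ioi_zero_exp_neg_mul_div_sqrt {c : ℝ} (hc : 0 < c) :
    ∫ y in Ioi 0, exp (-(c * y)) / √y = √(π / c) := by
  have hGamma : EqOn (fun y => exp (-(c * y)) / √y)
      (fun y => y ^ ((1 / 2 : ℝ) - 1) * exp (-(c * y))) (Ioi 0) := fun y hy => by
    dsimp only
    rw [show (1 / 2 : ℝ) - 1 = -(1 / 2) by norm_num, rpow_neg (le_of_lt hy), ← sqrt_eq_rpow,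
      div_eq_inv_mul]
  rw [setIntegral_congr_fun measurableSet_Ioi hGamma,
    integral_rpow_mul_exp_neg_mul_Ioi one_half_pos hc, Gamma_one_half_eq, ← sqrt_eq_rpow,
    ← sqrt_mul (by positivity), one_div_mul_eq_div]

lemma integrableOn_Ioi_zero_exp_neg_mul_div_sqrt {c : ℝ} (hc : 0 < c) :
    IntegrableOn (fun y => exp (-(c * y)) / √y) (Ioi 0) :=
  .of_integral_ne_zero (by rw [integral_Ioi_zero_exp_neg_mul_div_sqrt hc]; positivity)

lemma image_sq_div_Ioi_sqrt {c M : ℝ} (hc : 0 < c) (hM : 0 ≤ M) :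
    (fun u : ℝ => u ^ 2 / c) '' Ioi √(c * M) = Ioi M := by
  ext k
  constructor
  · rintro ⟨u, hu, rfl⟩
    have hu' : c * M < u ^ 2 := by
      simpa [sq_sqrt (by positivity : 0 ≤ c * M)] using
        pow_lt_pow_left₀ (mem_Ioi.1 hu) (sqrt_nonneg _) two_ne_zero
    exact (lt_div_iff₀ hc).2 (by linarith)
  · intro hk
    have hk0 : 0 ≤ c * k := by nlinarith [mem_Ioi.1 hk]
    refine ⟨√(c * k), sqrt_lt_sqrt (by positivity) (by nlinarith [mem_Ioi.1 hk]), ?_⟩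
    simp only [sq_sqrt hk0, mul_div_cancel_left₀ _ hc.ne']

lemma integral_Ioi_exp_neg_mul_div_sqrt_eq_erfc {c M : ℝ} (hc : 0 < c) (hM : 0 ≤ M) :
    ∫ k in Ioi M, exp (-(c * k)) / √k = √(π / c) * erfc √(c * M) := by
  have hderiv : ∀ u ∈ Ioi √(c * M),
      HasDerivWithinAt (fun u : ℝ => u ^ 2 / c) (2 * u / c) (Ioi √(c * M)) u := fun u _ => by
    simpa using ((hasDerivAt_pow 2 u).div_const c).hasDerivWithinAt
  have hinj : InjOn (fun u : ℝ => u ^ 2 / c) (Ioi √(c * M)) := fun u hu v hv huv => by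
    have hu0 := (sqrt_nonneg _).trans (mem_Ioi.1 hu).le
    have hv0 := (sqrt_nonneg _).trans (mem_Ioi.1 hv).le
    exact (sq_eq_sq₀ hu0 hv0).1 (by simpa [hc.ne'] using huv)
  have hintegrand : EqOn (fun u => |2 * u / c| • (exp (-(c * (u ^ 2 / c))) / √(u ^ 2 / c)))
      (fun u => 2 / √c * exp (-u ^ 2)) (Ioi √(c * M)) := fun u hu => by
    have hu0 : 0 < u := (sqrt_nonneg _).trans_lt hu
    have hsc : 0 < √c := sqrt_pos.2 hc
    simp only [smul_eq_mul]
    rw [abs_of_pos (by positivity), mul_div_cancel₀ _ hc.ne', sqrt_div (sq_nonneg u),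
      sqrt_sq hu0.le]
    field_simp
    rw [sq_sqrt hc.le]
  rw [← image_sq_div_Ioi_sqrt hc hM, integral_image_eq_integral_abs_deriv_smul measurableSet_Ioi
    hderiv hinj, setIntegral_congr_fun measurableSet_Ioi hintegrand,
    MeasureTheory.integral_const_mul, erfc, sqrt_div' _ hc.le]
  have hpi : 0 < √π := sqrt_pos.2 pi_pos
  field_simp

noncomputable def besselKernel (s : ℝ) (z : ℂ) : ℂ :=
  Complex.exp (Complex.I * s * z) * (1 - z ^ 2) ^ ((-(1 / 2) : ℝ) : ℂ)

namespace besselKernel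

variable {s b : ℝ}

lemma norm_eq (s : ℝ) (z : ℂ) : ‖besselKernel s z‖ = exp (-(s * z.im)) / √‖1 - z ^ 2‖ := by
  rw [besselKernel, norm_mul, Complex.norm_exp, Complex.norm_cpow_real, rpow_neg
    (norm_nonneg _), ← sqrt_eq_rpow, ← div_eq_mul_inv]
  simp

lemma differentiableAt {z : ℂ} (hz : |z.re| < 1) : DifferentiableAt ℂ (besselKernel s) z := by
  have hslit : 1 - z ^ 2 ∈ Complex.slitPlane := by
    refine Complex.mem_slitPlane_iff.2 (Or.inl ?_)
    have : z.re ^ 2 < 1 := by nlinarith [abs_nonneg z.re, sq_abs z.re]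
    simp only [Complex.sub_re, Complex.one_re, sq, Complex.mul_re]
    nlinarith [mul_self_nonneg z.im]
  unfold besselKernel
  fun_prop (disch := exact hslit)

lemma re_ofReal {t : ℝ} (ht : t ^ 2 ≤ 1) :
    (besselKernel s t).re = cos (s * t) / √(1 - t ^ 2) := by
  have hbase : (1 - (t : ℂ) ^ 2) = ((1 - t ^ 2 : ℝ) : ℂ) := by push_cast; ring
  rw [besselKernel, hbase, ← Complex.ofReal_cpow (by linarith), mul_comm Complex.I,
    mul_right_comm, ← Complex.ofReal_mul, Complex.re_mul_ofReal, Complex.exp_ofReal_mul_I_re,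
    rpow_neg (by linarith), ← sqrt_eq_rpow, div_eq_mul_inv]

lemma mul_I_eq_ofReal (s y : ℝ) :
    besselKernel s (y * Complex.I) = ((exp (-(s * y)) * (1 + y ^ 2) ^ (-(1 / 2) : ℝ) : ℝ) : ℂ) := by
  have harg : Complex.I * s * (y * Complex.I) = ((-(s * y) : ℝ) : ℂ) := by
    push_cast; ring_nf; simp
  have hbase : 1 - ((y : ℂ) * Complex.I) ^ 2 = ((1 + y ^ 2 : ℝ) : ℂ) := by
    push_cast; ring_nf; simp
  rw [besselKernel, harg, hbase, ← Complex.ofReal_cpow (by positivity),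
    ← Complex.ofReal_exp, ← Complex.ofReal_mul]

lemma norm_add_mul_I_le {y : ℝ} (hb : 0 < b) (hy : 0 < y) :
    ‖besselKernel s (b + y * Complex.I)‖ ≤ (√(2 * b))⁻¹ * (exp (-(s * y)) / √y) := by
  have him : |(1 - ((b : ℂ) + y * Complex.I) ^ 2).im| = 2 * b * y := by
    simp only [Complex.sub_im, Complex.one_im, sq, Complex.mul_im, Complex.add_re,
      Complex.add_im, Complex.ofReal_re, Complex.ofReal_im, Complex.mul_re, Complex.I_re,
      Complex.I_im]
    rw [abs_of_nonpos (by nlinarith)]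
    ring
  have hnorm : 2 * b * y ≤ ‖1 - ((b : ℂ) + y * Complex.I) ^ 2‖ := him ▸ Complex.abs_im_le_norm _
  have him' : ((b : ℂ) + y * Complex.I).im = y := by simp
  calc ‖besselKernel s (b + y * Complex.I)‖
      = exp (-(s * y)) / √‖1 - ((b : ℂ) + y * Complex.I) ^ 2‖ := by rw [norm_eq, him']
    _ ≤ exp (-(s * y)) / √(2 * b * y) := by gcongr
    _ = (√(2 * b))⁻¹ * (exp (-(s * y)) / √y) := by
      rw [sqrt_mul (by positivity)]
      field_simp

lemma norm_add_mul_I_le_of_one_le {t R : ℝ} (ht : t ^ 2 ≤ 1) (hR : 1 ≤ R) :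
    ‖besselKernel s (t + R * Complex.I)‖ ≤ exp (-(s * R)) := by
  have hre : 1 ≤ (1 - ((t : ℂ) + R * Complex.I) ^ 2).re := by
    simp only [Complex.sub_re, Complex.one_re, sq, Complex.mul_re, Complex.add_re,
      Complex.add_im, Complex.ofReal_re, Complex.ofReal_im, Complex.mul_im, Complex.I_re,
      Complex.I_im]
    nlinarith
  have him : ((t : ℂ) + R * Complex.I).im = R := by simp
  rw [norm_eq, him]
  refine div_le_self (exp_nonneg _) (one_le_sqrt.2 ?_)
  exact hre.trans (Complex.re_le_norm _)

/-- Cauchy's theorem on the rectangle `[0, b] × [0, R]`; the left edge drops out because the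
kernel is real on the imaginary axis. -/
lemma re_integral_eq_top_sub_right (hb0 : 0 < b) (hb1 : b < 1) (R : ℝ) :
    (∫ t in (0)..b, besselKernel s t).re =
      (∫ t in (0)..b, besselKernel s (t + R * Complex.I)).re -
        (Complex.I • ∫ y in (0)..R, besselKernel s (b + y * Complex.I)).re := by
  have hre : (b + R * Complex.I : ℂ).re = b := by simp
  have him : (b + R * Complex.I : ℂ).im = R := by simp
  have hdiff : DifferentiableOn ℂ (besselKernel s)
      (uIcc (0 : ℂ).re (b + R * Complex.I : ℂ).re ×ℂ
        uIcc (0 : ℂ).im (b + R * Complex.I : ℂ).im) := by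
    intro z hz
    rw [Complex.mem_reProdIm, hre, Complex.zero_re, uIcc_of_le hb0.le] at hz
    exact (differentiableAt (abs_lt.2 ⟨by linarith [hz.1.1], by linarith [hz.1.2]⟩))
      |>.differentiableWithinAt
  have hrect := congrArg Complex.re
    (Complex.integral_boundary_rect_eq_zero_of_differentiableOn _ _ _ hdiff)
  have hleft : (Complex.I • ∫ y in (0)..R, besselKernel s (y * Complex.I)).re = 0 := by
    simp only [mul_I_eq_ofReal, intervalIntegral.integral_ofReal]
    simp
  rw [hre, him, Complex.zero_re, Complex.zero_im] at hrect
  simp only [Complex.sub_re, Complex.add_re, Complex.ofReal_zero, zero_mul,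
    add_zero, zero_add] at hrect
  linarith

lemma norm_integral_add_mul_I_le (hb : 0 < b) (hs : 0 < s) {R : ℝ} (hR : 0 ≤ R) :
    ‖∫ y in (0)..R, besselKernel s (b + y * Complex.I)‖ ≤ √(π / s) / √(2 * b) := by
  have hint : IntegrableOn (fun y => (√(2 * b))⁻¹ * (exp (-(s * y)) / √y)) (Ioi 0) :=
    (integrableOn_Ioi_zero_exp_neg_mul_div_sqrt hs).const_mul _
  calc ‖∫ y in (0)..R, besselKernel s (b + y * Complex.I)‖
      ≤ ∫ y in (0)..R, (√(2 * b))⁻¹ * (exp (-(s * y)) / √y) :=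
        intervalIntegral.norm_integral_le_of_norm_le hR
          (.of_forall fun y hy => norm_add_mul_I_le hb hy.1)
          ((intervalIntegrable_iff_integrableOn_Ioc_of_le hR).2 (hint.mono_set Ioc_subset_Ioi_self))
    _ ≤ ∫ y in Ioi 0, (√(2 * b))⁻¹ * (exp (-(s * y)) / √y) := by
        rw [integral_of_le hR]
        refine setIntegral_mono_set hint ?_ Ioc_subset_Ioi_self.eventuallyLE
        filter_upwards [ae_restrict_mem measurableSet_Ioi] with y hy
        positivity
    _ = √(π / s) / √(2 * b) := by
        rw [MeasureTheory.integral_const_mul, integral_Ioi_zero_exp_neg_mul_div_sqrt hs,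
          inv_mul_eq_div]

lemma abs_integral_cos_div_sqrt_le (hs : 0 < s) (hb0 : 0 < b) (hb1 : b < 1) :
    |∫ t in (0)..b, cos (s * t) / √(1 - t ^ 2)| ≤ √(π / s) / √(2 * b) := by
  have hsq : ∀ t ∈ uIcc 0 b, t ^ 2 ≤ 1 := fun t ht => by
    rw [uIcc_of_le hb0.le] at ht
    nlinarith [ht.1, ht.2]
  have hcont : ContinuousOn (fun t : ℝ => besselKernel s t) (uIcc 0 b) := fun t ht => by
    rw [uIcc_of_le hb0.le] at ht
    have hlt : |t| < 1 := abs_lt.2 ⟨by linarith [ht.1], by linarith [ht.2]⟩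
    exact ((differentiableAt hlt).continuousAt.comp
      Complex.continuous_ofReal.continuousAt).continuousWithinAt
  have hbottom :
      (∫ t in (0)..b, besselKernel s t).re = ∫ t in (0)..b, cos (s * t) / √(1 - t ^ 2) := by
    rw [← Complex.reCLM_apply, ← Complex.reCLM.intervalIntegral_comp_comm hcont.intervalIntegrable]
    exact integral_congr fun t ht => re_ofReal (hsq t ht)
  have hbound : ∀ R ≥ 1, |∫ t in (0)..b, cos (s * t) / √(1 - t ^ 2)| ≤
      exp (-(s * R)) * b + √(π / s) / √(2 * b) := fun R hR => by
    rw [← hbottom, re_integral_eq_top_sub_right hb0 hb1 R]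
    refine (abs_sub _ _).trans (add_le_add ?_ ?_)
    · refine (Complex.abs_re_le_norm _).trans ?_
      simpa [abs_of_pos hb0] using norm_integral_le_of_norm_le_const fun t ht =>
        norm_add_mul_I_le_of_one_le (hsq t (uIoc_subset_uIcc ht)) hR
    · refine (Complex.abs_re_le_norm _).trans ?_
      rw [norm_smul, Complex.norm_I, one_mul]
      exact norm_integral_add_mul_I_le hb0 hs (by linarith)
  have hlim : Tendsto (fun R => exp (-(s * R)) * b + √(π / s) / √(2 * b)) atTop
      (𝓝 (0 * b + √(π / s) / √(2 * b))) :=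
    ((tendsto_exp_neg_atTop_nhds_zero.comp (tendsto_id.const_mul_atTop hs)).mul_const b).add_const _
  rw [zero_mul, zero_add] at hlim
  exact ge_of_tendsto hlim (eventually_ge_atTop 1 |>.mono hbound)

end besselKernel

lemma abs_integral_cos_mul_sin_le {s : ℝ} (hs : 0 < s) :
    |∫ θ in (0)..(π / 2), cos (s * sin θ)| ≤ √(π / s) / √2 := by
  have hg : Continuous fun t => cos (s * t) := by fun_prop
  have hbound : ∀ b ∈ Ioo (0 : ℝ) 1, |∫ θ in (0)..(π / 2), cos (s * sin θ)| ≤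
      √(π / s) / √(2 * b) + (π / 2 - arcsin b) := fun b hb => by
    have hint : ∀ u v : ℝ, IntervalIntegrable (fun θ => cos (s * sin θ)) volume u v :=
      fun u v => (hg.comp continuous_sin).intervalIntegrable u v
    rw [← integral_add_adjacent_intervals (hint 0 (arcsin b)) (hint _ (π / 2))]
    refine (abs_add_le _ _).trans (add_le_add ?_ ?_)
    · rw [integral_comp_sin_zero_arcsin hg hb.1.le hb.2]
      exact besselKernel.abs_integral_cos_div_sqrt_le hs hb.1 hb.2
    · simpa [abs_of_nonneg (sub_nonneg.2 (arcsin_le_pi_div_two b))] using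
        norm_integral_le_of_norm_le_const (a := arcsin b) (b := π / 2) (C := 1)
          fun θ _ => (norm_eq_abs _).trans_le (abs_cos_le_one _)
  have hcont : ContinuousAt (fun b => √(π / s) / √(2 * b) + (π / 2 - arcsin b)) 1 := by
    refine ContinuousAt.add (ContinuousAt.div continuousAt_const (by fun_prop) ?_) (by fun_prop)
    positivity
  have hlim := hcont.tendsto.mono_left (nhdsWithin_le_nhds (s := Iio 1))
  simp only [mul_one, arcsin_one, sub_self, add_zero] at hlim
  exact ge_of_tendsto hlim (mem_of_superset (Ioo_mem_nhdsLT zero_lt_one) hbound)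

lemma abs_besselJ0_le {x : ℝ} (hx : 0 < x) : |besselJ0 x| ≤ √(2 / π) / √x := by
  rw [besselJ0_eq_integral_cos,
    integral_comp_sin_zero_two_pi (g := fun t => cos (x * t)) (by fun_prop) (by simp),
    abs_mul, abs_mul, abs_of_pos (by positivity), abs_of_pos four_pos]
  calc (2 * π)⁻¹ * (4 * |∫ θ in (0)..(π / 2), cos (x * sin θ)|)
      ≤ (2 * π)⁻¹ * (4 * (√(π / x) / √2)) := by gcongr; exact abs_integral_cos_mul_sin_le hx
    _ = √(2 / π) / √x := by
      rw [sqrt_div' _ hx.le, sqrt_div' _ pi_pos.le]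
      field_simp
      rw [sq_sqrt pi_pos.le, sq_sqrt zero_le_two]
      ring

lemma abs_div_one_sub_mul_le {γ e : ℝ} (hγ : |γ| < 1) (he0 : 0 ≤ e) (he1 : e ≤ 1) :
    |γ / (1 - γ * e)| ≤ |γ| / (1 - max 0 γ) := by
  have hmax : γ * e ≤ max 0 γ := by
    rcases le_total 0 γ with h | h
    · exact (mul_le_of_le_one_right h he1).trans (le_max_right _ _)
    · exact (mul_nonpos_of_nonpos_of_nonneg h he0).trans (le_max_left _ _)
  have hpos : 0 < 1 - max 0 γ := sub_pos.2 (max_lt one_pos (le_abs_self γ |>.trans_lt hγ))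
  rw [abs_div, abs_of_pos (a := 1 - γ * e) (by linarith)]
  exact div_le_div_of_nonneg_left (abs_nonneg γ) hpos (by linarith)

lemma abs_termIb_integrand_le {Lz a ρ γ k : ℝ} (hLz : 0 < Lz) (ha : 0 < a) (hρ : 0 < ρ)
    (hk : 0 < k) (hγ : |γ| < 1) :
    |γ / (1 - γ * exp (-2 * k * Lz)) * exp (-2 * k * Lz) * exp (-a * k) * besselJ0 (ρ * k)| ≤
      |γ| / (1 - max 0 γ) * √(2 / π) / √ρ * (exp (-(2 * Lz * k)) / √k) := by
  have hE : exp (-2 * k * Lz) ≤ 1 := exp_le_one_iff.2 (by nlinarith)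
  have hA : exp (-a * k) ≤ 1 := exp_le_one_iff.2 (by nlinarith)
  have hfactor := abs_div_one_sub_mul_le hγ (exp_nonneg _) hE
  have hC : 0 ≤ |γ| / (1 - max 0 γ) := (abs_nonneg _).trans hfactor
  have hJ := abs_besselJ0_le (mul_pos hρ hk)
  rw [abs_mul, abs_mul, abs_mul, abs_exp, abs_exp]
  calc |γ / (1 - γ * exp (-2 * k * Lz))| * exp (-2 * k * Lz) * exp (-a * k) * |besselJ0 (ρ * k)|
      ≤ |γ| / (1 - max 0 γ) * exp (-2 * k * Lz) * 1 * (√(2 / π) / √(ρ * k)) := by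
        gcongr
    _ = |γ| / (1 - max 0 γ) * √(2 / π) / √ρ * (exp (-(2 * Lz * k)) / √k) := by
        rw [sqrt_mul hρ.le, show -(2 * Lz * k) = -2 * k * Lz by ring]
        ring

/-- truncation error bound for Term I(b). -/
theorem truncation_error_term_Ib
    (Lz a ρ M γu γd : ℝ) (hLz : 0 < Lz) (ha : 0 < a) (hρ : 0 < ρ) (hM : 0 ≤ M)
    (hu : |γu| < 1) (hd : |γd| < 1) :
    |∫ k in Set.Ioi M,
        (γu * γd / (1 - γu * γd * Real.exp (-2 * k * Lz))) *
          Real.exp (-2 * k * Lz) * Real.exp (-a * k) * besselJ0 (ρ * k)|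
      ≤ (|γu * γd| / (1 - max 0 (γu * γd))) * (1 / Real.sqrt (ρ * Lz)) *
          erfc (Real.sqrt (2 * Lz * M)) := by
  have hγ : |γu * γd| < 1 := by
    rw [abs_mul]
    nlinarith [abs_nonneg γu, abs_nonneg γd]
  have hc : 0 < 2 * Lz := by positivity
  have hint := ((integrableOn_Ioi_zero_exp_neg_mul_div_sqrt hc).mono_set
    (Ioi_subset_Ioi hM)).const_mul (|γu * γd| / (1 - max 0 (γu * γd)) * √(2 / π) / √ρ)
  rw [← norm_eq_abs]
  calc _ ≤ ∫ k in Ioi M, |γu * γd| / (1 - max 0 (γu * γd)) * √(2 / π) / √ρ *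
          (exp (-(2 * Lz * k)) / √k) :=
        MeasureTheory.norm_integral_le_of_norm_le hint <|
          (ae_restrict_iff' measurableSet_Ioi).2 <| .of_forall fun k hk =>
            abs_termIb_integrand_le hLz ha hρ (hM.trans_lt hk) hγ
    _ = |γu * γd| / (1 - max 0 (γu * γd)) * √(2 / π) / √ρ *
          (√(π / (2 * Lz)) * erfc √(2 * Lz * M)) := by
        rw [MeasureTheory.integral_const_mul, integral_Ioi_exp_neg_mul_div_sqrt_eq_erfc hc hM]
    _ = _ := by
        rw [sqrt_div' _ hc.le, sqrt_div' _ pi_pos.le, sqrt_mul hρ.le, sqrt_mul zero_le_two]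
        field_simp
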